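/- Let 1 ≤ k ≤ n and let S∘T be a (k−1)-upper run of an n-DPDA in which the second part T is k-upper. Then S is (k−1)-upper. -/

import Mathlib

namespace HOPDA

/-- Iterated exponentiation `pow` from the paper:
`pow [] = 1`, `pow (m :: l) = (1 + m) ^ pow l - 1`. -/
def pow : List ℕ → ℕ
  | [] => 1
  | m :: l => (1 + m) ^ pow l - 1

/-! ### Higher-order stacks.

Stacks are represented positionlessly (nested lists of symbols); the positions of the
paper are represented by *addresses*: lists of bottom-based indices leading from the
outermost level into the stack.  Equality of contents is positionless equality `≅`. -/

inductive St (Γ : Type) : Type where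
  | leaf (γ : Γ) : St Γ
  | node (l : List (St Γ)) : St Γ

/-- `IsValid k s` : `s` is a stack of order `k` all of whose component stacks are nonempty. -/
def IsValid {Γ : Type} : ℕ → St Γ → Prop
  | 0, St.leaf _ => True
  | 0, St.node _ => False
  | _ + 1, St.leaf _ => False
  | k + 1, St.node l => l ≠ [] ∧ ∀ t ∈ l, IsValid k t

/-- The address of the topmost substack `d` levels below the surface
(indices count from the bottom of each stack, as the positions in the paper do). -/
def topAddr {Γ : Type} : St Γ → ℕ → List ℕ
  | _, 0 => []
  | St.leaf _, _ + 1 => []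
  | St.node l, d + 1 => (l.length - 1) :: topAddr (l.getLastD (St.node [])) d

/-- The substack sitting at a given address. -/
def sub? {Γ : Type} : St Γ → List ℕ → Option (St Γ)
  | s, [] => some s
  | St.leaf _, _ :: _ => none
  | St.node l, i :: p =>
      match l[i]? with
      | some t => sub? t p
      | none => none

/-- Modify the substack at a given address. -/
def modAt {Γ : Type} : St Γ → List ℕ → (St Γ → Option (St Γ)) → Option (St Γ)
  | s, [], f => f s
  | St.leaf _, _ :: _, _ => none
  | St.node l, i :: p, f =>
      match l[i]? with
      | none => none
      | some t =>
          match modAt t p f with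
          | none => none
          | some t' => some (St.node (l.set i t'))

/-- The topmost stack symbol of an order-`n` stack. -/
def topLeaf? {Γ : Type} (n : ℕ) (s : St Γ) : Option Γ :=
  match sub? s (topAddr s n) with
  | some (St.leaf γ) => some γ
  | _ => none

/-- The content of the topmost `k`-stack of an order-`n` stack (`top^k`);
equality of these contents is positionless equality `≅` of topmost `k`-stacks. -/
def topStk {Γ : Type} (n : ℕ) (s : St Γ) (k : ℕ) : Option (St Γ) :=
  sub? s (topAddr s (n - k))

/-- Number of components of the (composite) stack at the given address. -/
def sizeAt {Γ : Type} (s : St Γ) (p : List ℕ) : ℕ :=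
  match sub? s p with
  | some (St.node l) => l.length
  | _ => 0

/-- Remove the topmost component of a composite stack
(defined only when it has at least two components). -/
def popStk {Γ : Type} : St Γ → Option (St Γ)
  | St.node l => if 2 ≤ l.length then some (St.node l.dropLast) else none
  | St.leaf _ => none

/-- Duplicate the topmost `(r-1)`-stack of an `r`-stack,
replacing the topmost symbol of the new copy by `γ`. -/
def dupTop {Γ : Type} (r : ℕ) (γ : Γ) : St Γ → Option (St Γ)
  | St.node l =>
      match l.getLast? with
      | none => none
      | some t =>
          match modAt t (topAddr t (r - 1)) (fun u =>
            match u with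
            | St.leaf _ => some (St.leaf γ)
            | St.node _ => none) with
          | none => none
          | some t' => some (St.node (l ++ [t']))
  | St.leaf _ => none

/-- `push^r_γ` on an order-`n` stack. -/
def pushOp {Γ : Type} (n r : ℕ) (γ : Γ) (s : St Γ) : Option (St Γ) :=
  modAt s (topAddr s (n - r)) (dupTop r γ)

/-- `pop^r` on an order-`n` stack. -/
def popOp {Γ : Type} (n r : ℕ) (s : St Γ) : Option (St Γ) :=
  modAt s (topAddr s (n - r)) popStk

/-- Stack operations of an order-`n` pushdown automaton. -/
inductive Op (Γ : Type) where
  | pop (k : ℕ)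
  | push (k : ℕ) (γ : Γ)

def applyOp {Γ : Type} (n : ℕ) : Op Γ → St Γ → Option (St Γ)
  | Op.pop k, s => if 1 ≤ k ∧ k ≤ n then popOp n k s else none
  | Op.push k γ, s => if 1 ≤ k ∧ k ≤ n then pushOp n k γ s else none

/-- The one-step history function on addresses: for the address of a substack of
`op(s)` it returns the address of the substack of `s` from which it originates. -/
def histStep {Γ : Type} (n : ℕ) : Op Γ → St Γ → List ℕ → List ℕ
  | Op.pop _, _, p => p
  | Op.push r _, s, p =>
      let m := n - r
      let ta := topAddr s m
      let sz := sizeAt s ta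
      if p.take (m + 1) = ta ++ [sz] then p.set m (sz - 1) else p

/-! ### Deterministic order-`n` pushdown automata -/

inductive Trans (A Γ Q : Type) where
  | read (f : A → Q)
  | op (q : Q) (o : Op Γ)

/-- A deterministic order-`n` pushdown automaton. -/
structure DPDA (n : ℕ) (A Γ : Type) where
  Q : Type
  finQ : Finite Q
  qI : Q
  γI : Γ
  F : Set Q
  δ : Q → Γ → Trans A Γ Q
  read_inj : ∀ q γ f, δ q γ = Trans.read f → Function.Injective f

/-- One step of an `n`-DPDA; the label records the letter read (if any). -/
inductive Step {n : ℕ} {A Γ : Type} (D : DPDA n A Γ) :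
    D.Q × St Γ → Option A → D.Q × St Γ → Prop where
  | read {q : D.Q} {s : St Γ} {γ : Γ} {f : A → D.Q} (a : A) :
      IsValid n s → topLeaf? n s = some γ → D.δ q γ = Trans.read f →
      Step D (q, s) (some a) (f a, s)
  | op {q : D.Q} {s s' : St Γ} {γ : Γ} {q' : D.Q} {o : Op Γ} :
      IsValid n s → topLeaf? n s = some γ → D.δ q γ = Trans.op q' o →
      applyOp n o s = some s' →
      Step D (q, s) none (q', s')

/-- A (finite) run `R(0), …, R(len)` of an `n`-DPDA. -/
structure Run {n : ℕ} {A Γ : Type} (D : DPDA n A Γ) where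
  len : ℕ
  cfg : ℕ → D.Q × St Γ
  lab : ℕ → Option A
  ok : ∀ i < len, Step D (cfg i) (lab i) (cfg (i + 1))

namespace Run

variable {n : ℕ} {A Γ : Type} {D : DPDA n A Γ}

/-- The word read by a run. -/
def word (R : Run D) : List A := (List.range R.len).filterMap R.lab

/-- The subrun `R[i,j]`. -/
def sub (R : Run D) (i j : ℕ) : Run D where
  len := min j R.len - i
  cfg := fun t => R.cfg (i + t)
  lab := fun t => R.lab (i + t)
  ok := fun t ht => R.ok (i + t) (by omega)

/-- The history function of the single step starting at position `j` of the run. -/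
def stepHist (R : Run D) (j : ℕ) : List ℕ → List ℕ :=
  match topLeaf? n (R.cfg j).2 with
  | none => id
  | some γ =>
      match D.δ (R.cfg j).1 γ with
      | Trans.read _ => id
      | Trans.op _ o => histStep n o (R.cfg j).2

/-- `histTo R i j p` : the address in `R(i)` of the origin (history) of the substack
of `R(j)` sitting at address `p` (meaningful for `i ≤ j ≤ R.len`). -/
def histTo (R : Run D) (i : ℕ) : ℕ → List ℕ → List ℕ
  | 0, p => p
  | j + 1, p => if j + 1 ≤ i then p else histTo R i j (stepHist R j p)

/-- A run is `k`-upper when the topmost `k`-stack at its end originates from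
the topmost `k`-stack at its start. -/
def IsUpper (R : Run D) (k : ℕ) : Prop :=
  histTo R 0 R.len (topAddr (R.cfg R.len).2 (n - k)) = topAddr (R.cfg 0).2 (n - k)

/-- A run is a `k`-return when the topmost `(k-1)`-stack at its end originates from the
topmost `(k-1)`-stack of `pop^k` of its starting stack, and no suffix is `(k-1)`-upper. -/
def IsReturn (R : Run D) (k : ℕ) : Prop :=
  (histTo R 0 R.len (topAddr (R.cfg R.len).2 (n - (k - 1))) =
    topAddr (R.cfg 0).2 (n - k) ++
      [sizeAt (R.cfg 0).2 (topAddr (R.cfg 0).2 (n - k)) - 2]) ∧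
  ∀ i < R.len, ¬ (R.sub i R.len).IsUpper (k - 1)

end Run

/-- `R` is the composition `S ∘ T` of the runs `S` and `T`. -/
def IsComp {n : ℕ} {A Γ : Type} {D : DPDA n A Γ} (R S T : Run D) : Prop :=
  S.cfg S.len = T.cfg 0 ∧ R.len = S.len + T.len ∧
  (∀ i ≤ S.len, R.cfg i = S.cfg i) ∧ (∀ i < S.len, R.lab i = S.lab i) ∧
  (∀ i ≤ T.len, R.cfg (S.len + i) = T.cfg i) ∧ (∀ i < T.len, R.lab (S.len + i) = T.lab i)

/-- `Decomp R k r c` : `c 0 < c 1 < … < c r` are the cut points of the (unique)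
decomposition of the `k`-upper run `R` into the maximal number of nonempty
`k`-upper runs. -/
def Decomp {n : ℕ} {A Γ : Type} {D : DPDA n A Γ} (R : Run D) (k r : ℕ) (c : ℕ → ℕ) : Prop :=
  c 0 = 0 ∧ c r = R.len ∧ (∀ j < r, c j < c (j + 1)) ∧ (∀ j ≤ r, c j ≤ R.len) ∧
  (∀ j < r, (R.sub (c j) (c (j + 1))).IsUpper k) ∧
  (∀ j < r, ∀ i, c j < i → i < c (j + 1) → ¬ (R.sub i (c (j + 1))).IsUpper k)

/-- The image under the morphism generated by `φ` of a word. -/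
def phiW {A M : Type} [Monoid M] (φ : A → M) (w : List A) : M := (w.map φ).prod

/-- The two `k`-upper runs `R` and `S` are `(k,φ)`-parallel. -/
def Parallel {n : ℕ} {A Γ M : Type} [Monoid M] {D : DPDA n A Γ}
    (φ : A → M) (R S : Run D) (k : ℕ) : Prop :=
  R.IsUpper k ∧ S.IsUpper k ∧
  topStk n (R.cfg R.len).2 k = topStk n (S.cfg S.len).2 k ∧
  ∃ (r : ℕ) (cR cS : ℕ → ℕ), Decomp R k r cR ∧ Decomp S k r cS ∧
    ∀ j < r,
      phiW φ (R.sub (cR j) (cR (j + 1))).word = phiW φ (S.sub (cS j) (cS (j + 1))).word ∧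
      topStk n (R.cfg (cR j)).2 k = topStk n (S.cfg (cS j)).2 k

/-- An infinite run of an `n`-DPDA. -/
structure InfRun {n : ℕ} {A Γ : Type} (D : DPDA n A Γ) where
  cfg : ℕ → D.Q × St Γ
  lab : ℕ → Option A
  ok : ∀ i, Step D (cfg i) (lab i) (cfg (i + 1))

/-- The finite subrun `R[i,j]` of an infinite run. -/
def InfRun.sub {n : ℕ} {A Γ : Type} {D : DPDA n A Γ} (R : InfRun D) (i j : ℕ) : Run D where
  len := j - i
  cfg := fun t => R.cfg (i + t)
  lab := fun t => R.lab (i + t)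
  ok := fun t _ => R.ok (i + t)

/-- A step label reads nothing, or reads the `star` symbol. -/
def OnlyStar {A : Type} (star : A) (o : Option A) : Prop := o = none ∨ o = some star

/-- Milestone configurations. -/
def Milestone {n : ℕ} {A Γ : Type} {D : DPDA n A Γ} (star : A) (c : D.Q × St Γ) : Prop :=
  ∃ R : InfRun D, R.cfg 0 = c ∧ (∀ i, OnlyStar star (R.lab i)) ∧
    ∃ I : Set ℕ, I.Infinite ∧ 0 ∈ I ∧ ∀ i ∈ I, ∀ j ∈ I, i ≤ j → (R.sub i j).IsUpper 0

/-- The initial order-`n` stack, containing the single symbol `γ`. -/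
def initStack (n : ℕ) {Γ : Type} (γ : Γ) : St Γ :=
  Nat.rec (motive := fun _ => St Γ) (St.leaf γ) (fun _ s => St.node [s]) n

def initCfg {n : ℕ} {A Γ : Type} (D : DPDA n A Γ) : D.Q × St Γ := (D.qI, initStack n D.γI)

/-- The language recognized by an `n`-DPDA. -/
def Lang {n : ℕ} {A Γ : Type} (D : DPDA n A Γ) : Set (List A) :=
  { w | ∃ R : Run D, R.cfg 0 = initCfg D ∧ R.word = w ∧ (R.cfg R.len).1 ∈ D.F }

/-! ### Deterministic order-2 collapsible pushdown automata -/

/-- Stack operations of an order-2 collapsible pushdown automaton. -/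
inductive COp (Γ : Type) where
  | pop1
  | pop2
  | push1 (γ : Γ)
  | push2 (γ : Γ)
  | collapse

/-- An order-2 collapsible stack: a list of 1-stacks (topmost first), each a list of
0-stacks (topmost first) storing a symbol and the collapse link (a natural number). -/
abbrev CStk (Γ : Type) := List (List (Γ × ℕ))

/-- Semantics of the order-2 collapsible stack operations. -/
def capply {Γ : Type} : COp Γ → CStk Γ → Option (CStk Γ)
  | COp.pop1, (_ :: x :: t) :: rest => some ((x :: t) :: rest)
  | COp.pop1, _ => none
  | COp.pop2, _ :: s :: rest => some (s :: rest)
  | COp.pop2, _ => none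
  | COp.push1 γ, (x :: t) :: rest => some (((γ, rest.length + 1) :: x :: t) :: rest)
  | COp.push1 _, _ => none
  | COp.push2 γ, ((x, m) :: t) :: rest => some (((γ, m) :: t) :: ((x, m) :: t) :: rest)
  | COp.push2 _, _ => none
  | COp.collapse, ((x, m) :: t) :: rest =>
      if 1 ≤ m - 1 ∧ m - 1 ≤ rest.length + 1 then
        some ((((x, m) :: t) :: rest).drop (rest.length + 1 - (m - 1)))
      else none
  | COp.collapse, _ => none

/-- The topmost stack symbol of an order-2 collapsible stack. -/
def ctop? {Γ : Type} : CStk Γ → Option Γ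
  | ((γ, _) :: _) :: _ => some γ
  | _ => none

inductive CTrans (A Γ Q : Type) where
  | read (f : A → Q)
  | op (q : Q) (o : COp Γ)

/-- A deterministic order-2 collapsible pushdown automaton. -/
structure CPDA2 (A Γ : Type) where
  Q : Type
  finQ : Finite Q
  qI : Q
  γI : Γ
  F : Set Q
  δ : Q → Γ → CTrans A Γ Q
  read_inj : ∀ q γ f, δ q γ = CTrans.read f → Function.Injective f

inductive CStep {A Γ : Type} (D : CPDA2 A Γ) :
    D.Q × CStk Γ → Option A → D.Q × CStk Γ → Prop where
  | read {q : D.Q} {s : CStk Γ} {γ : Γ} {f : A → D.Q} (a : A) :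
      ctop? s = some γ → D.δ q γ = CTrans.read f → CStep D (q, s) (some a) (f a, s)
  | op {q : D.Q} {s s' : CStk Γ} {γ : Γ} {q' : D.Q} {o : COp Γ} :
      ctop? s = some γ → D.δ q γ = CTrans.op q' o → capply o s = some s' →
      CStep D (q, s) none (q', s')

structure CRun {A Γ : Type} (D : CPDA2 A Γ) where
  len : ℕ
  cfg : ℕ → D.Q × CStk Γ
  lab : ℕ → Option A
  ok : ∀ i < len, CStep D (cfg i) (lab i) (cfg (i + 1))

def CRun.word {A Γ : Type} {D : CPDA2 A Γ} (R : CRun D) : List A :=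
  (List.range R.len).filterMap R.lab

def cinitCfg {A Γ : Type} (D : CPDA2 A Γ) : D.Q × CStk Γ := (D.qI, [[(D.γI, 1)]])

/-- The language recognized by a 2-DCPDA. -/
def CLang {A Γ : Type} (D : CPDA2 A Γ) : Set (List A) :=
  { w | ∃ R : CRun D, R.cfg 0 = cinitCfg D ∧ R.word = w ∧ (R.cfg R.len).1 ∈ D.F }

/-! ### The alphabet `{[, ], ⋆, ♯}`, the function `stars`, and the language `U` -/

inductive Alph : Type where
  | lb    -- the opening bracket [
  | rb    -- the closing bracket ]
  | star  -- ⋆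
  | sharp -- ♯
  deriving DecidableEq

instance instFintypeAlph : Fintype Alph :=
  ⟨{Alph.lb, Alph.rb, Alph.star, Alph.sharp}, fun x => by cases x <;> decide⟩

/-- Processes a word over `{[, ], ⋆}`, keeping the total number of stars read so far and,
for each currently unmatched opening bracket (most recent first), the number of stars
read before it; returns `none` iff some prefix has more `]` than `[`. -/
def starsAux : List Alph → ℕ → List ℕ → Option (List ℕ)
  | [], _, st => some st
  | Alph.star :: w, cnt, st => starsAux w (cnt + 1) st
  | Alph.lb :: w, cnt, st => starsAux w cnt (cnt :: st)
  | Alph.rb :: w, cnt, st =>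
      match st with
      | [] => none
      | _ :: st' => starsAux w cnt st'
  | Alph.sharp :: _, _, _ => none

/-- `stars w` : `0` if some prefix of `w` has more closing than opening brackets, or if
`w` has equally many opening and closing brackets; otherwise the number of `⋆`s in `w`
before the last opening bracket of `w` not matched by a closing bracket. -/
def stars (w : List Alph) : ℕ :=
  match starsAux w 0 [] with
  | some (c :: _) => c
  | _ => 0

/-- The language `U = { w ♯^(stars(w)+1) | w ∈ {[, ], ⋆}* }`. -/
def U : Set (List Alph) :=
  { u | ∃ w : List Alph, Alph.sharp ∉ w ∧ u = w ++ List.replicate (stars w + 1) Alph.sharp }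

/-! ### Tree-generating pushdown systems -/

inductive TTrans (A Γ Q : Type) where
  | branch (a : A) (next : ℕ → Q)
  | op (q : Q) (o : Op Γ)

/-- A deterministic tree-generating order-`n` pushdown system (without collapse)
over the ranked alphabet `(A, rank)`. -/
structure TreePDA (n : ℕ) (A Γ : Type) (rank : A → ℕ) where
  Q : Type
  finQ : Finite Q
  qI : Q
  γI : Γ
  δ : Q → Γ → TTrans A Γ Q
  branch_inj : ∀ q γ a next, δ q γ = TTrans.branch a next →
      ∀ i j, i < rank a → j < rank a → next i = next j → i = j

/-- One step of a tree-generating `n`-PDS; the label records the child chosen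
at a branch step (if any). -/
inductive TStep {n : ℕ} {A Γ : Type} {rank : A → ℕ} (D : TreePDA n A Γ rank) :
    D.Q × St Γ → Option ℕ → D.Q × St Γ → Prop where
  | branch {q : D.Q} {s : St Γ} {γ : Γ} {a : A} {next : ℕ → D.Q} {i : ℕ} :
      IsValid n s → topLeaf? n s = some γ → D.δ q γ = TTrans.branch a next → i < rank a →
      TStep D (q, s) (some i) (next i, s)
  | op {q : D.Q} {s s' : St Γ} {γ : Γ} {q' : D.Q} {o : Op Γ} :
      IsValid n s → topLeaf? n s = some γ → D.δ q γ = TTrans.op q' o →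
      applyOp n o s = some s' →
      TStep D (q, s) none (q', s')

def TReach {n : ℕ} {A Γ : Type} {rank : A → ℕ} (D : TreePDA n A Γ rank) :
    D.Q × St Γ → D.Q × St Γ → Prop :=
  Relation.ReflTransGen (fun c c' => ∃ o, TStep D c o c')

def TOpReach {n : ℕ} {A Γ : Type} {rank : A → ℕ} (D : TreePDA n A Γ rank) :
    D.Q × St Γ → D.Q × St Γ → Prop :=
  Relation.ReflTransGen (fun c c' => TStep D c none c')

/-- `c` is a configuration at which a `branch(a,…)` transition applies. -/
def TIsBr {n : ℕ} {A Γ : Type} {rank : A → ℕ} (D : TreePDA n A Γ rank)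
    (c : D.Q × St Γ) (a : A) : Prop :=
  ∃ γ next, IsValid n c.2 ∧ topLeaf? n c.2 = some γ ∧ D.δ c.1 γ = TTrans.branch a next

/-- `TFollow D c p c'` : starting from the branch configuration `c` and following
the child choices `p` (each branch step being followed by op steps up to the next
branch configuration) one arrives at the branch configuration `c'`. -/
inductive TFollow {n : ℕ} {A Γ : Type} {rank : A → ℕ} (D : TreePDA n A Γ rank) :
    D.Q × St Γ → List ℕ → D.Q × St Γ → Prop where
  | nil (c : D.Q × St Γ) : TFollow D c [] c
  | cons {c c₁ c₂ c₃ : D.Q × St Γ} {i : ℕ} {p : List ℕ} :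
      TStep D c (some i) c₁ → TOpReach D c₁ c₂ → (∃ a, TIsBr D c₂ a) →
      TFollow D c₂ p c₃ → TFollow D c (i :: p) c₃

def tinitCfg {n : ℕ} {A Γ : Type} {rank : A → ℕ} (D : TreePDA n A Γ rank) : D.Q × St Γ :=
  (D.qI, initStack n D.γI)

/-- `D` generates the ranked tree whose labelling function is `t`
(`t p = some a` iff the node at position `p` exists and is labelled `a`). -/
def TGenerates {n : ℕ} {A Γ : Type} {rank : A → ℕ} (D : TreePDA n A Γ rank)
    (t : List ℕ → Option A) : Prop :=
  (∀ c, TReach D (tinitCfg D) c → ∃ c' a, TReach D c c' ∧ TIsBr D c' a) ∧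
  ∃ c₀, TOpReach D (tinitCfg D) c₀ ∧ (∃ a, TIsBr D c₀ a) ∧
    ∀ p a, t p = some a ↔ ∃ c, TFollow D c₀ p c ∧ TIsBr D c a

/-! ### Tree-generating order-2 collapsible pushdown systems -/

inductive CTTrans (A Γ Q : Type) where
  | branch (a : A) (next : ℕ → Q)
  | op (q : Q) (o : COp Γ)

structure CTreePDA (A Γ : Type) (rank : A → ℕ) where
  Q : Type
  finQ : Finite Q
  qI : Q
  γI : Γ
  δ : Q → Γ → CTTrans A Γ Q
  branch_inj : ∀ q γ a next, δ q γ = CTTrans.branch a next →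
      ∀ i j, i < rank a → j < rank a → next i = next j → i = j

inductive CTStep {A Γ : Type} {rank : A → ℕ} (D : CTreePDA A Γ rank) :
    D.Q × CStk Γ → Option ℕ → D.Q × CStk Γ → Prop where
  | branch {q : D.Q} {s : CStk Γ} {γ : Γ} {a : A} {next : ℕ → D.Q} {i : ℕ} :
      ctop? s = some γ → D.δ q γ = CTTrans.branch a next → i < rank a →
      CTStep D (q, s) (some i) (next i, s)
  | op {q : D.Q} {s s' : CStk Γ} {γ : Γ} {q' : D.Q} {o : COp Γ} :
      ctop? s = some γ → D.δ q γ = CTTrans.op q' o → capply o s = some s' →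
      CTStep D (q, s) none (q', s')

def CTReach {A Γ : Type} {rank : A → ℕ} (D : CTreePDA A Γ rank) :
    D.Q × CStk Γ → D.Q × CStk Γ → Prop :=
  Relation.ReflTransGen (fun c c' => ∃ o, CTStep D c o c')

def CTOpReach {A Γ : Type} {rank : A → ℕ} (D : CTreePDA A Γ rank) :
    D.Q × CStk Γ → D.Q × CStk Γ → Prop :=
  Relation.ReflTransGen (fun c c' => CTStep D c none c')

def CTIsBr {A Γ : Type} {rank : A → ℕ} (D : CTreePDA A Γ rank)
    (c : D.Q × CStk Γ) (a : A) : Prop :=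
  ∃ γ next, ctop? c.2 = some γ ∧ D.δ c.1 γ = CTTrans.branch a next

inductive CTFollow {A Γ : Type} {rank : A → ℕ} (D : CTreePDA A Γ rank) :
    D.Q × CStk Γ → List ℕ → D.Q × CStk Γ → Prop where
  | nil (c : D.Q × CStk Γ) : CTFollow D c [] c
  | cons {c c₁ c₂ c₃ : D.Q × CStk Γ} {i : ℕ} {p : List ℕ} :
      CTStep D c (some i) c₁ → CTOpReach D c₁ c₂ → (∃ a, CTIsBr D c₂ a) →
      CTFollow D c₂ p c₃ → CTFollow D c (i :: p) c₃

def ctinitCfg {A Γ : Type} {rank : A → ℕ} (D : CTreePDA A Γ rank) : D.Q × CStk Γ :=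
  (D.qI, [[(D.γI, 1)]])

/-- The order-2 collapsible pushdown system `D` generates the ranked tree whose
labelling function is `t`. -/
def CTGenerates {A Γ : Type} {rank : A → ℕ} (D : CTreePDA A Γ rank)
    (t : List ℕ → Option A) : Prop :=
  (∀ c, CTReach D (ctinitCfg D) c → ∃ c' a, CTReach D c c' ∧ CTIsBr D c' a) ∧
  ∃ c₀, CTOpReach D (ctinitCfg D) c₀ ∧ (∃ a, CTIsBr D c₀ a) ∧
    ∀ p a, t p = some a ↔ ∃ c, CTFollow D c₀ p c ∧ CTIsBr D c a

/-! Since `T` is `k`-upper, the topmost `(k-1)`-stack at the end of `T` originates from some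
entry `j` of the topmost `k`-stack of `T(0)`, which, like every existing entry, lies at or
below its topmost entry `b`.  Histories along `S` keep sibling entries in order and send
existing stacks to existing stacks.  As `S ∘ T` is `(k-1)`-upper, the `S`-history of `j` is
the topmost entry of the topmost `k`-stack of `S(0)`; the `S`-history of `b` is an existing
sibling at least as high, hence it is that topmost entry as well. -/

section Stacks

variable {Γ : Type}

@[simp] lemma sub?_nil (s : St Γ) : sub? s [] = some s := by cases s <;> rfl

@[simp] lemma sub?_leaf_cons (γ : Γ) (i : ℕ) (w : List ℕ) :
    sub? (St.leaf γ) (i :: w) = none :=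
  rfl

@[simp] lemma sub?_node_cons (l : List (St Γ)) (i : ℕ) (w : List ℕ) :
    sub? (St.node l) (i :: w) = l[i]?.bind (sub? · w) := by
  simp only [sub?]
  cases l[i]? <;> rfl

@[simp] lemma topAddr_zero (s : St Γ) : topAddr s 0 = [] := by cases s <;> rfl

@[simp] lemma topAddr_node_concat (l : List (St Γ)) (x : St Γ) (d : ℕ) :
    topAddr (St.node (l ++ [x])) (d + 1) = l.length :: topAddr x d := by
  simp [topAddr]

lemma length_topAddr_le (s : St Γ) (d : ℕ) : (topAddr s d).length ≤ d := by
  induction d generalizing s with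
  | zero => simp
  | succ d ih =>
    cases s with
    | leaf γ => simp [topAddr]
    | node l => simpa [topAddr] using ih _

lemma take_topAddr (s : St Γ) {d d' : ℕ} (hd : d ≤ d') :
    (topAddr s d').take d = topAddr s d := by
  induction d generalizing s d' with
  | zero => simp
  | succ d ih =>
    obtain ⟨d', rfl⟩ : ∃ e, d' = e + 1 := ⟨d' - 1, by omega⟩
    cases s with
    | leaf γ => simp [topAddr]
    | node l => simp [topAddr, ih _ (Nat.le_of_succ_le_succ hd)]

lemma IsValid.eq_node_concat {c : ℕ} {s : St Γ} (h : IsValid (c + 1) s) :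
    ∃ l x, s = St.node (l ++ [x]) ∧ ∀ t ∈ l ++ [x], IsValid c t := by
  cases s with
  | leaf γ => exact h.elim
  | node l =>
    obtain ⟨hne, hall⟩ := h
    obtain ⟨l, x, rfl⟩ := (List.eq_nil_or_concat l).resolve_left hne
    exact ⟨l, x, by simp, by simpa using hall⟩

lemma IsValid.length_topAddr {c d : ℕ} {s : St Γ} (h : IsValid c s) (hd : d ≤ c) :
    (topAddr s d).length = d := by
  induction d generalizing s c with
  | zero => simp
  | succ d ih =>
    obtain ⟨c, rfl⟩ : ∃ e, c = e + 1 := ⟨c - 1, by omega⟩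
    obtain ⟨l, x, rfl, hall⟩ := h.eq_node_concat
    simp [ih (hall x (by simp)) (by omega)]

lemma IsValid.exists_sub?_topAddr {c d : ℕ} {s : St Γ} (h : IsValid c s) (hd : d ≤ c) :
    ∃ t, sub? s (topAddr s d) = some t ∧ IsValid (c - d) t := by
  induction d generalizing s c with
  | zero => exact ⟨s, by simpa using h⟩
  | succ d ih =>
    obtain ⟨c, rfl⟩ : ∃ e, c = e + 1 := ⟨c - 1, by omega⟩
    obtain ⟨l, x, rfl, hall⟩ := h.eq_node_concat
    obtain ⟨t, ht, htv⟩ := ih (hall x (by simp)) (by omega)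
    exact ⟨t, by simpa using ht, by simpa using htv⟩

lemma IsValid.exists_topAddr_succ {c d : ℕ} {s : St Γ} (h : IsValid c s) (hd : d < c) :
    ∃ b, topAddr s (d + 1) = topAddr s d ++ [b] ∧
      ∀ i, sub? s (topAddr s d ++ [i]) ≠ none → i ≤ b := by
  induction d generalizing s c with
  | zero =>
    obtain ⟨c, rfl⟩ : ∃ e, c = e + 1 := ⟨c - 1, by omega⟩
    obtain ⟨l, x, rfl, -⟩ := h.eq_node_concat
    refine ⟨l.length, by simp, fun i hi => ?_⟩
    by_contra hlt
    simp [List.getElem?_eq_none (by simp; omega : (l ++ [x]).length ≤ i)] at hi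
  | succ d ih =>
    obtain ⟨c, rfl⟩ : ∃ e, c = e + 1 := ⟨c - 1, by omega⟩
    obtain ⟨l, x, rfl, hall⟩ := h.eq_node_concat
    obtain ⟨b, hb, hmax⟩ := ih (hall x (by simp)) (by omega)
    exact ⟨b, by simp [hb], fun i hi => hmax i (by simpa using hi)⟩

end Stacks

section ModAt

variable {Γ : Type}

@[simp] lemma modAt_nil (s : St Γ) (f : St Γ → Option (St Γ)) : modAt s [] f = f s := by
  cases s <;> rfl

lemma modAt_node_cons_eq_some {l : List (St Γ)} {i : ℕ} {q : List ℕ}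
    {f : St Γ → Option (St Γ)} {s' : St Γ} (h : modAt (St.node l) (i :: q) f = some s') :
    ∃ t t', l[i]? = some t ∧ modAt t q f = some t' ∧ s' = St.node (l.set i t') := by
  simp only [modAt] at h
  split at h
  · simp at h
  · split at h
    · simp at h
    · exact ⟨_, _, by assumption, by assumption, (Option.some.inj h).symm⟩

lemma sub?_ne_none_of_modAt_translate {s s' : St Γ} {q : List ℕ} {f : St Γ → Option (St Γ)}
    (h : modAt s q f = some s') (g : List ℕ → List ℕ)
    (hf : ∀ t t', sub? s q = some t → f t = some t' →
      ∀ w, sub? t' w ≠ none → sub? t (g w) ≠ none)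
    {p : List ℕ} (hp : sub? s' p ≠ none) :
    sub? s (if q <+: p then q ++ g (p.drop q.length) else p) ≠ none := by
  induction q generalizing s s' p with
  | nil => simpa using hf s s' (sub?_nil s) (by simpa using h) p hp
  | cons i q ih =>
    cases s with
    | leaf γ => simp [modAt] at h
    | node l =>
      obtain ⟨t, t', hl, hm, rfl⟩ := modAt_node_cons_eq_some h
      cases p with
      | nil => simp
      | cons j p =>
        by_cases hji : j = i
        · subst hji
          have := ih hm (fun u u' hu => hf u u' (by simpa [hl] using hu))
            (p := p) (by simpa [List.getElem?_set_self (List.getElem?_eq_some_iff.1 hl).1] using hp)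
          by_cases hpre : q <+: p <;> simpa [hpre, hl] using this
        · have hpre : ¬ i :: q <+: j :: p := by simp [Ne.symm hji]
          simpa [hpre, List.getElem?_set_ne (Ne.symm hji)] using hp

lemma IsValid.modAt {c : ℕ} {s s' : St Γ} {q : List ℕ} {f : St Γ → Option (St Γ)}
    (hv : IsValid c s) (hq : q.length ≤ c)
    (hf : ∀ t t', f t = some t' → IsValid (c - q.length) t → IsValid (c - q.length) t')
    (h : modAt s q f = some s') : IsValid c s' := by
  induction q generalizing s s' c with
  | nil => simpa using hf s s' (by simpa using h) (by simpa using hv)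
  | cons i q ih =>
    obtain ⟨c, rfl⟩ : ∃ e, c = e + 1 := ⟨c - 1, by simp at hq; omega⟩
    cases s with
    | leaf γ => exact hv.elim
    | node l =>
      obtain ⟨t, t', hl, hm, rfl⟩ := modAt_node_cons_eq_some h
      obtain ⟨hne, hall⟩ := hv
      have ht' : IsValid c t' :=
        ih (hall t (List.mem_of_getElem? hl)) (by simpa using hq) (by simpa using hf) hm
      refine ⟨by simpa using hne, fun u hu => ?_⟩
      rcases List.mem_or_eq_of_mem_set hu with hu | rfl
      · exact hall u hu
      · exact ht'

end ModAt

section Operations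

variable {Γ : Type}

lemma sub?_ne_none_of_modAt {s s' : St Γ} {q : List ℕ} {f : St Γ → Option (St Γ)}
    (h : modAt s q f = some s')
    (hf : ∀ t t', f t = some t' → ∀ w, sub? t' w ≠ none → sub? t w ≠ none)
    {p : List ℕ} (hp : sub? s' p ≠ none) : sub? s p ≠ none := by
  have := sub?_ne_none_of_modAt_translate h id (fun t t' _ => hf t t') hp
  split_ifs at this with hpre
  · rwa [id, List.prefix_iff_eq_append.1 hpre] at this
  · exact this

lemma sub?_ne_none_of_popStk {t t' : St Γ} (h : popStk t = some t') {w : List ℕ}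
    (hw : sub? t' w ≠ none) : sub? t w ≠ none := by
  cases t with
  | leaf γ => simp [popStk] at h
  | node l =>
    simp only [popStk] at h
    split_ifs at h
    cases h
    cases w with
    | nil => simp
    | cons i w =>
      simp only [sub?_node_cons, List.getElem?_dropLast] at hw ⊢
      split_ifs at hw
      · exact hw
      · simp at hw

lemma IsValid.popStk {c : ℕ} {t t' : St Γ} (hv : IsValid c t) (h : popStk t = some t') :
    IsValid c t' := by
  cases t with
  | leaf γ => simp [HOPDA.popStk] at h
  | node l =>
    simp only [HOPDA.popStk] at h
    split_ifs at h with hl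
    cases h
    cases c with
    | zero => exact hv.elim
    | succ c =>
      refine ⟨?_, fun u hu => hv.2 u (List.mem_of_mem_dropLast hu)⟩
      rw [← List.length_pos_iff, List.length_dropLast]
      omega

/-- The modification that `dupTop` applies to the topmost `0`-stack of the new copy. -/
def replaceLeaf (γ : Γ) : St Γ → Option (St Γ)
  | St.leaf _ => some (St.leaf γ)
  | St.node _ => none

lemma dupTop_eq_some {r : ℕ} {γ : Γ} {t t' : St Γ} (h : dupTop r γ t = some t') :
    ∃ l u u', t = St.node l ∧ l.getLast? = some u ∧
      modAt u (topAddr u (r - 1)) (replaceLeaf γ) = some u' ∧ t' = St.node (l ++ [u']) := by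
  cases t with
  | leaf δ => simp [dupTop] at h
  | node l =>
    simp only [dupTop] at h
    split at h
    · simp at h
    · split at h
      · simp at h
      · exact ⟨l, _, _, rfl, by assumption, by assumption, (Option.some.inj h).symm⟩

lemma sub?_ne_none_of_modAt_replaceLeaf {γ : Γ} {u u' : St Γ} {q : List ℕ}
    (h : modAt u q (replaceLeaf γ) = some u') {w : List ℕ} (hw : sub? u' w ≠ none) :
    sub? u w ≠ none := by
  refine sub?_ne_none_of_modAt h (fun v v' hv w hw => ?_) hw
  cases v with
  | node _ => simp [replaceLeaf] at hv
  | leaf δ =>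
    cases Option.some.inj hv
    cases w <;> simp_all

lemma IsValid.dupTop {r : ℕ} {γ : Γ} {t t' : St Γ} (hv : IsValid r t)
    (h : dupTop r γ t = some t') : IsValid r t' := by
  obtain ⟨l, u, u', rfl, hu, hmod, rfl⟩ := dupTop_eq_some h
  obtain ⟨r, rfl⟩ : ∃ e, r = e + 1 := by
    cases r with
    | zero => exact hv.elim
    | succ r => exact ⟨r, rfl⟩
  have huv : IsValid r u := hv.2 u (List.mem_of_getLast? hu)
  have hu'v : IsValid r u' := by
    refine huv.modAt (by simpa using length_topAddr_le u r) (fun v v' hv' _ => ?_) hmod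
    cases v with
    | node _ => simp [replaceLeaf] at hv'
    | leaf δ =>
      cases Option.some.inj hv'
      simp only [Nat.add_sub_cancel, huv.length_topAddr le_rfl, Nat.sub_self]
      trivial
  refine ⟨by simp, fun v hv' => ?_⟩
  rcases List.mem_append.1 hv' with hv' | hv'
  · exact hv.2 v hv'
  · rwa [List.mem_singleton.1 hv']

lemma IsValid.applyOp {n : ℕ} {o : Op Γ} {s s' : St Γ} (hv : IsValid n s)
    (h : applyOp n o s = some s') : IsValid n s' := by
  cases o with
  | pop r =>
    simp only [HOPDA.applyOp, popOp] at h
    split_ifs at h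
    exact hv.modAt (length_topAddr_le _ _ |>.trans (by omega)) (fun t t' ht htv => htv.popStk ht) h
  | push r γ =>
    simp only [HOPDA.applyOp, pushOp] at h
    split_ifs at h with hr
    have hta : (topAddr s (n - r)).length = n - r := hv.length_topAddr (by omega)
    refine hv.modAt (by omega) (fun t t' ht htv => ?_) h
    rw [hta, show n - (n - r) = r by omega] at htv ⊢
    exact htv.dupTop ht

end Operations

section History

variable {Γ : Type}

/-- Origin under `push` of an address relative to the pushed stack of size `sz`:
the new entry `sz` is a copy of entry `sz - 1`. -/
def dupOrigin (sz : ℕ) : List ℕ → List ℕ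
  | [] => []
  | i :: w => if i = sz then (sz - 1) :: w else i :: w

lemma histStep_push {n r : ℕ} {γ : Γ} {s : St Γ}
    (hta : (topAddr s (n - r)).length = n - r) (p : List ℕ) :
    histStep n (Op.push r γ) s p =
      if topAddr s (n - r) <+: p then
        topAddr s (n - r) ++ dupOrigin (sizeAt s (topAddr s (n - r))) (p.drop (n - r))
      else p := by
  simp only [histStep]
  set ta := topAddr s (n - r)
  set sz := sizeAt s ta
  by_cases hpre : ta <+: p
  · obtain ⟨w, rfl⟩ := hpre
    rw [List.take_append, hta, Nat.add_sub_cancel_left, List.take_of_length_le (by omega),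
      List.drop_left' hta]
    cases w with
    | nil => simp [dupOrigin]
    | cons i w =>
      by_cases hi : i = sz
      · subst hi
        simp [dupOrigin, List.set_append_right _ _ hta.le, hta]
      · simp [dupOrigin, hi]
  · have hne : ¬ (p.take (n - r + 1) = ta ++ [sz]) := fun h =>
      hpre ((List.prefix_append ta [sz]).trans (h ▸ List.take_prefix _ p))
    simp [hne, hpre]

lemma sub?_histStep_ne_none {n : ℕ} {o : Op Γ} {s s' : St Γ} (hv : IsValid n s)
    (h : applyOp n o s = some s') {p : List ℕ} (hp : sub? s' p ≠ none) :
    sub? s (histStep n o s p) ≠ none := by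
  cases o with
  | pop r =>
    simp only [applyOp, popOp] at h
    split_ifs at h
    exact sub?_ne_none_of_modAt h (fun t t' ht _ hw => sub?_ne_none_of_popStk ht hw) hp
  | push r γ =>
    simp only [applyOp, pushOp] at h
    split_ifs at h with hr
    have hta : (topAddr s (n - r)).length = n - r := hv.length_topAddr (by omega)
    rw [histStep_push hta]
    have key := sub?_ne_none_of_modAt_translate h (dupOrigin (sizeAt s (topAddr s (n - r))))
      (fun t t' ht hdup w hw => ?_) hp
    · rwa [hta] at key
    obtain ⟨l, u, u', rfl, hu, hmod, rfl⟩ := dupTop_eq_some hdup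
    have hsz : sizeAt s (topAddr s (n - r)) = l.length := by simp [sizeAt, ht]
    rw [hsz]
    cases w with
    | nil => simp [dupOrigin]
    | cons i w =>
      rcases lt_trichotomy i l.length with hi | rfl | hi
      · simpa [dupOrigin, hi.ne, List.getElem?_append_left hi] using hw
      · have hlast : l[l.length - 1]? = some u := by rwa [← List.getLast?_eq_getElem?]
        simpa [dupOrigin, hlast] using sub?_ne_none_of_modAt_replaceLeaf hmod (by simpa using hw)
      · simp [List.getElem?_eq_none (by simp; omega : (l ++ [u']).length ≤ i)] at hw

lemma length_histStep (n : ℕ) (o : Op Γ) (s : St Γ) (p : List ℕ) :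
    (histStep n o s p).length = p.length := by
  cases o with
  | pop r => rfl
  | push r γ =>
    simp only [histStep]
    split_ifs <;> simp

lemma take_histStep (n : ℕ) (o : Op Γ) (s : St Γ) (p : List ℕ) (t : ℕ) :
    (histStep n o s p).take t = histStep n o s (p.take t) := by
  cases o with
  | pop r => rfl
  | push r γ =>
    simp only [histStep]
    rcases le_or_gt t (n - r) with ht | ht
    · have hset : ∀ x, (p.take t).set (n - r) x = p.take t :=
        fun x => List.set_eq_of_length_le (by simp; omega)
      split_ifs <;> simp [List.take_set, hset]
    · have htake : (p.take t).take (n - r + 1) = p.take (n - r + 1) := by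
        simp [List.take_take]; omega
      simp only [htake]
      split_ifs <;> simp [List.take_set]

lemma histStep_mono (n : ℕ) (o : Op Γ) (s : St Γ) (u : List ℕ) {a b : ℕ} (hab : a ≤ b) :
    ∃ v a' b', histStep n o s (u ++ [a]) = v ++ [a'] ∧
      histStep n o s (u ++ [b]) = v ++ [b'] ∧ a' ≤ b' := by
  cases o with
  | pop r => exact ⟨u, a, b, rfl, rfl, hab⟩
  | push r γ =>
    simp only [histStep]
    set m := n - r
    set ta := topAddr s m
    set sz := sizeAt s ta
    rcases lt_trichotomy m u.length with hlt | heq | hgt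
    · have htake : ∀ x, (u ++ [x]).take (m + 1) = u.take (m + 1) := fun x => by
        simp [List.take_append]; omega
      by_cases hc : u.take (m + 1) = ta ++ [sz]
      · exact ⟨u.set m (sz - 1), a, b, by simp [htake, hc, List.set_append_left _ _ hlt],
          by simp [htake, hc, List.set_append_left _ _ hlt], hab⟩
      · exact ⟨u, a, b, by simp [htake, hc], by simp [htake, hc], hab⟩
    · have hlast : ∀ x, (if (u ++ [x]).take (m + 1) = ta ++ [sz] then
          (u ++ [x]).set m (sz - 1) else u ++ [x]) =
          u ++ [if u = ta ∧ x = sz then sz - 1 else x] := fun x => by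
        rw [List.take_of_length_le (by simp; omega), List.set_append_right _ _ heq.ge,
          show m - u.length = 0 by omega]
        by_cases hc : u = ta ∧ x = sz
        · simp [hc]
        · rw [if_neg (fun h => hc (by simpa using List.append_inj' h rfl)), if_neg hc]
      refine ⟨u, _, _, hlast a, hlast b, ?_⟩
      by_cases hu : u = ta
      · simp only [hu, true_and]
        split_ifs <;> omega
      · simpa [hu] using hab
    · have hid : ∀ x, (if (u ++ [x]).take (m + 1) = ta ++ [sz] then
          (u ++ [x]).set m (sz - 1) else u ++ [x]) = u ++ [x] := fun x => by
        split_ifs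
        · exact List.set_eq_of_length_le (by simp; omega)
        · rfl
      exact ⟨u, a, b, hid a, hid b, hab⟩

end History

section Runs

variable {n : ℕ} {A Γ : Type} {D : DPDA n A Γ}

lemma Step.isValid_left {c c' : D.Q × St Γ} {a : Option A} (h : Step D c a c') :
    IsValid n c.2 := by
  cases h <;> assumption

lemma Step.isValid_right {c c' : D.Q × St Γ} {a : Option A} (h : Step D c a c') :
    IsValid n c'.2 := by
  cases h with
  | read _ hv => exact hv
  | op hv _ _ happ => exact hv.applyOp happ

namespace Run

lemma isValid_cfg (X : Run D) (hlen : 0 < X.len) {i : ℕ} (hi : i ≤ X.len) :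
    IsValid n (X.cfg i).2 := by
  rcases hi.lt_or_eq with hi | rfl
  · exact (X.ok i hi).isValid_left
  · obtain ⟨j, hj⟩ : ∃ j, X.len = j + 1 := ⟨X.len - 1, by omega⟩
    exact hj ▸ (X.ok j (by omega)).isValid_right

lemma stepHist_eq_id_or (X : Run D) (j : ℕ) :
    X.stepHist j = id ∨ ∃ o : Op Γ, X.stepHist j = histStep n o (X.cfg j).2 := by
  unfold stepHist
  split
  · exact Or.inl rfl
  · split
    · exact Or.inl rfl
    · exact Or.inr ⟨_, rfl⟩

lemma stepHist_spec (X : Run D) {j : ℕ} (hj : j < X.len) :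
    X.stepHist j = id ∧ (X.cfg (j + 1)).2 = (X.cfg j).2 ∨
      ∃ o, X.stepHist j = histStep n o (X.cfg j).2 ∧
        applyOp n o (X.cfg j).2 = some (X.cfg (j + 1)).2 := by
  have h := X.ok j hj
  unfold stepHist
  generalize X.cfg j = c, X.cfg (j + 1) = c', X.lab j = a at h ⊢
  cases h with
  | read _ _ htop hδ => exact Or.inl ⟨by simp [htop, hδ], rfl⟩
  | op _ htop hδ happ => exact Or.inr ⟨_, by simp [htop, hδ], happ⟩

lemma length_stepHist (X : Run D) (j : ℕ) (p : List ℕ) :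
    (X.stepHist j p).length = p.length := by
  rcases X.stepHist_eq_id_or j with h | ⟨o, h⟩ <;> simp [h, length_histStep]

lemma take_stepHist (X : Run D) (j : ℕ) (p : List ℕ) (t : ℕ) :
    (X.stepHist j p).take t = X.stepHist j (p.take t) := by
  rcases X.stepHist_eq_id_or j with h | ⟨o, h⟩ <;> simp [h, take_histStep]

lemma stepHist_mono (X : Run D) (j : ℕ) (u : List ℕ) {a b : ℕ} (hab : a ≤ b) :
    ∃ v a' b', X.stepHist j (u ++ [a]) = v ++ [a'] ∧
      X.stepHist j (u ++ [b]) = v ++ [b'] ∧ a' ≤ b' := by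
  rcases X.stepHist_eq_id_or j with h | ⟨o, h⟩
  · exact ⟨u, a, b, by simp [h], by simp [h], hab⟩
  · simpa [h] using histStep_mono n o _ u hab

lemma sub?_stepHist_ne_none (X : Run D) {j : ℕ} (hj : j < X.len) {p : List ℕ}
    (hp : sub? (X.cfg (j + 1)).2 p ≠ none) : sub? (X.cfg j).2 (X.stepHist j p) ≠ none := by
  rcases X.stepHist_spec hj with ⟨h, hc⟩ | ⟨o, h, happ⟩
  · simpa [h, hc] using hp
  · rw [h]
    exact sub?_histStep_ne_none (X.isValid_cfg (by omega) hj.le) happ hp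

lemma stepHist_congr {X Y : Run D} {j j' : ℕ} (h : X.cfg j = Y.cfg j') :
    X.stepHist j = Y.stepHist j' := by
  rw [stepHist, stepHist, h]

lemma histTo_succ (X : Run D) (i j : ℕ) (p : List ℕ) :
    X.histTo i (j + 1) p = if j + 1 ≤ i then p else X.histTo i j (X.stepHist j p) :=
  rfl

lemma histTo_of_le (X : Run D) {i j : ℕ} (h : j ≤ i) (p : List ℕ) : X.histTo i j p = p := by
  cases j with
  | zero => rfl
  | succ j => rw [histTo_succ, if_pos h]

lemma length_histTo (X : Run D) (i j : ℕ) (p : List ℕ) :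
    (X.histTo i j p).length = p.length := by
  induction j generalizing p with
  | zero => rfl
  | succ j ih =>
    rw [histTo_succ]
    split_ifs
    · rfl
    · rw [ih, length_stepHist]

lemma take_histTo (X : Run D) (i j : ℕ) (p : List ℕ) (t : ℕ) :
    (X.histTo i j p).take t = X.histTo i j (p.take t) := by
  induction j generalizing p with
  | zero => rfl
  | succ j ih =>
    rw [histTo_succ, histTo_succ]
    split_ifs
    · rfl
    · rw [ih, take_stepHist]

lemma histTo_mono (X : Run D) (i j : ℕ) (u : List ℕ) {a b : ℕ} (hab : a ≤ b) :
    ∃ v a' b', X.histTo i j (u ++ [a]) = v ++ [a'] ∧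
      X.histTo i j (u ++ [b]) = v ++ [b'] ∧ a' ≤ b' := by
  induction j generalizing u a b with
  | zero => exact ⟨u, a, b, rfl, rfl, hab⟩
  | succ j ih =>
    rw [histTo_succ, histTo_succ]
    split_ifs
    · exact ⟨u, a, b, rfl, rfl, hab⟩
    · obtain ⟨v₁, a₁, b₁, h₁a, h₁b, hab₁⟩ := X.stepHist_mono j u hab
      obtain ⟨v, a', b', ha, hb, hab'⟩ := ih v₁ hab₁
      exact ⟨v, a', b', by rw [h₁a, ha], by rw [h₁b, hb], hab'⟩

lemma sub?_histTo_ne_none (X : Run D) {i j : ℕ} (hij : i ≤ j) (hj : j ≤ X.len) {p : List ℕ}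
    (hp : sub? (X.cfg j).2 p ≠ none) : sub? (X.cfg i).2 (X.histTo i j p) ≠ none := by
  induction j, hij using Nat.le_induction generalizing p with
  | base => rwa [histTo_of_le X le_rfl]
  | succ j hij ih =>
    rw [histTo_succ, if_neg (by omega)]
    exact ih (by omega) (X.sub?_stepHist_ne_none (by omega) hp)

lemma histTo_trans (X : Run D) {i j l : ℕ} (hij : i ≤ j) (hjl : j ≤ l) (p : List ℕ) :
    X.histTo i l p = X.histTo i j (X.histTo j l p) := by
  induction l, hjl using Nat.le_induction generalizing p with
  | base => rw [histTo_of_le X le_rfl]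
  | succ l hjl ih => rw [histTo_succ, histTo_succ, if_neg (by omega), if_neg (by omega), ih]

lemma histTo_shift {X Y : Run D} {b m : ℕ} (hc : ∀ x ≤ m, X.cfg (b + x) = Y.cfg x) {j : ℕ}
    (hj : j ≤ m) (p : List ℕ) : X.histTo b (b + j) p = Y.histTo 0 j p := by
  induction j generalizing p with
  | zero => exact X.histTo_of_le le_rfl p
  | succ j ih =>
    rw [← add_assoc, histTo_succ, histTo_succ, if_neg (by omega), if_neg (by omega),
      stepHist_congr (hc j (by omega)), ih (by omega)]

lemma histTo_of_isComp {R S T : Run D} (h : IsComp R S T) (p : List ℕ) :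
    R.histTo 0 R.len p = S.histTo 0 S.len (T.histTo 0 T.len p) := by
  obtain ⟨-, hlen, hcS, -, hcT, -⟩ := h
  rw [hlen, R.histTo_trans (Nat.zero_le _) (Nat.le_add_right _ _), histTo_shift hcT le_rfl]
  simpa using histTo_shift (b := 0) (by simpa using hcS) le_rfl _

lemma IsUpper.exists_histTo_topAddr_succ {X : Run D} {k : ℕ} (h : X.IsUpper k) (hk : 0 < k)
    (hkn : k ≤ n) (hv : IsValid n (X.cfg X.len).2) :
    ∃ j, X.histTo 0 X.len (topAddr (X.cfg X.len).2 (n - k + 1)) =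
        topAddr (X.cfg 0).2 (n - k) ++ [j] ∧
      sub? (X.cfg 0).2 (topAddr (X.cfg 0).2 (n - k) ++ [j]) ≠ none := by
  set q := X.histTo 0 X.len (topAddr (X.cfg X.len).2 (n - k + 1))
  have hlen : q.length = n - k + 1 := by
    rw [length_histTo, hv.length_topAddr (by omega)]
  have htake : q.take (n - k) = topAddr (X.cfg 0).2 (n - k) := by
    rw [take_histTo, take_topAddr _ (Nat.le_succ _)]
    exact h
  obtain ⟨j, hj⟩ := List.length_eq_one_iff.1 (show (q.drop (n - k)).length = 1 by simp [hlen])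
  have hq : q = topAddr (X.cfg 0).2 (n - k) ++ [j] := by
    rw [← htake, ← hj, List.take_append_drop]
  refine ⟨j, hq, hq ▸ X.sub?_histTo_ne_none (Nat.zero_le _) le_rfl ?_⟩
  obtain ⟨t, ht, -⟩ := hv.exists_sub?_topAddr (d := n - k + 1) (by omega)
  simp [ht]

end Run

end Runs

theorem statement6_general {n : ℕ} {A Γ : Type}
    {D : DPDA n A Γ} (k : ℕ) (hk1 : 1 ≤ k) (hk : k ≤ n) (R S T : Run D)
    (hST : IsComp R S T) (hR : R.IsUpper (k - 1)) (hT : T.IsUpper k) :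
    S.IsUpper (k - 1) := by
  have hhist := Run.histTo_of_isComp hST
  obtain ⟨hmid, hlen, hcS, -, hcT, -⟩ := hST
  rcases Nat.eq_zero_or_pos S.len with hS | hS
  · simp [Run.IsUpper, hS, Run.histTo]
  have hd : n - (k - 1) = n - k + 1 := by omega
  have hvR : ∀ i ≤ R.len, IsValid n (R.cfg i).2 := fun i => R.isValid_cfg (by omega)
  have hvS0 : IsValid n (S.cfg 0).2 := hcS 0 (Nat.zero_le _) ▸ hvR 0 (Nat.zero_le _)
  have hvT0 : IsValid n (T.cfg 0).2 := hcT 0 (Nat.zero_le _) ▸ hvR _ (by omega)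
  have hvT : IsValid n (T.cfg T.len).2 := hcT T.len le_rfl ▸ hvR _ (by omega)
  obtain ⟨j, hj, hjT⟩ := hT.exists_histTo_topAddr_succ (by omega) hk hvT
  obtain ⟨bT, hbT, hmaxT⟩ := hvT0.exists_topAddr_succ (d := n - k) (by omega)
  obtain ⟨bS, hbS, hmaxS⟩ := hvS0.exists_topAddr_succ (d := n - k) (by omega)
  obtain ⟨v, a, a', ha, ha', haa'⟩ :=
    S.histTo_mono 0 S.len (topAddr (T.cfg 0).2 (n - k)) (hmaxT j hjT)
  have hRS : v ++ [a] = topAddr (S.cfg 0).2 (n - k) ++ [bS] := by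
    unfold Run.IsUpper at hR
    rwa [hd, hhist, hlen, hcT T.len le_rfl, hj, ha, hcS 0 (Nat.zero_le _), hbS] at hR
  obtain ⟨rfl, ha_eq⟩ := List.append_inj' hRS rfl
  have hab : a = bS := List.singleton_inj.1 ha_eq
  have ha'b : a' ≤ bS := by
    refine hmaxS a' (ha' ▸ S.sub?_histTo_ne_none (Nat.zero_le _) le_rfl ?_)
    obtain ⟨t, ht, -⟩ := hvT0.exists_sub?_topAddr (d := n - k + 1) (by omega)
    simp [hmid, ← hbT, ht]
  unfold Run.IsUpper
  rw [hd, hmid, hbT, ha', hbS, le_antisymm ha'b (hab ▸ haa')]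

/-- Let `1 ≤ k ≤ n` and let `S ∘ T` be a `(k-1)`-upper run of an
`n`-DPDA in which the second part `T` is `k`-upper.  Then `S` is `(k-1)`-upper. -/
theorem statement6 {n : ℕ} (hn : 1 ≤ n) {A Γ : Type} [Finite A] [Finite Γ]
    {D : DPDA n A Γ} (k : ℕ) (hk1 : 1 ≤ k) (hk : k ≤ n) (R S T : Run D)
    (hST : IsComp R S T) (hR : R.IsUpper (k - 1)) (hT : T.IsUpper k) :
    S.IsUpper (k - 1) :=
  statement6_general k hk1 hk R S T hST hR hT

end HOPDA
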